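/- Let p be a prime and a, b, c, d ∈ ZMod p with ad − bc ≠ 0. If the rational function X(cX+d)/(aX+b) ∈ F_p(X) is a perfect h-th power times a constant in F_p(X) for some h ≥ 3, then b = 0 and c = 0. -/

import Mathlib

/-!
Clearing denominators turns `N / D = t • P ^ h` into the polynomial identity
`N · denom(P)^h = t · num(P)^h · D`, so at every point the root multiplicities of `N` and `D`
agree modulo `h`. For `N = X (cX + d)` and `D = aX + b` all these multiplicities are at most
`2 < h`, hence equal: every root of `N` is a root of `D`. The root `0` of `N` forces `b = 0`, and
then the root `-d/c` of `N` (when `c ≠ 0`) would be a root of `aX`, contradicting `ad ≠ 0`.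
-/

open Polynomial

namespace Polynomial

theorem C_mul_X_add_C_ne_zero {R : Type*} [Semiring R] {u v : R} (huv : u ≠ 0 ∨ v ≠ 0) :
    C u * X + C v ≠ 0 := by
  intro h0
  have hu := congrArg (coeff · 1) h0
  have hv := congrArg (coeff · 0) h0
  simp only [coeff_add, coeff_C_mul_X, coeff_C, coeff_zero] at hu hv
  simp_all

theorem rootMultiplicity_le_natDegree {R : Type*} [CommRing R] [IsDomain R] (p : R[X]) (x : R) :
    rootMultiplicity x p ≤ p.natDegree := by
  classical
  rw [← count_roots]
  exact (Multiset.count_le_card x p.roots).trans (card_roots' p)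

theorem rootMultiplicity_modEq_of_mul_pow_eq {R : Type*} [CommRing R] [IsDomain R]
    {N D Q S : R[X]} {t : R} {h : ℕ} (heq : N * Q ^ h = C t * S ^ h * D) (hne : N * Q ^ h ≠ 0)
    (x : R) : rootMultiplicity x N ≡ rootMultiplicity x D [MOD h] := by
  classical
  have hne' : C t * S ^ h * D ≠ 0 := heq ▸ hne
  have ht : t ≠ 0 := by rintro rfl; simp at hne'
  have hroots : N.roots + h • Q.roots = h • S.roots + D.roots := by
    rw [← roots_pow, ← roots_pow, ← roots_mul hne, heq, roots_mul hne', roots_C_mul _ ht]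
  have hcount := congrArg (Multiset.count x) hroots
  simp only [Multiset.count_add, Multiset.count_nsmul, count_roots] at hcount
  unfold Nat.ModEq
  rw [← Nat.add_mul_mod_self_left (rootMultiplicity x N) h, hcount, add_comm,
    Nat.add_mul_mod_self_left]

end Polynomial

namespace RatFunc

variable {K : Type*} [Field K]

theorem mul_denom_pow_eq_of_div_eq {N D : K[X]} (hD : D ≠ 0) {t : K} {P : RatFunc K} {h : ℕ}
    (hP : algebraMap K[X] (RatFunc K) N / algebraMap K[X] (RatFunc K) D = C t * P ^ h) :
    N * P.denom ^ h = Polynomial.C t * P.num ^ h * D := by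
  apply algebraMap_injective K
  have hD' : algebraMap K[X] (RatFunc K) D ≠ 0 := by simpa using hD
  have hden : algebraMap K[X] (RatFunc K) P.denom ≠ 0 := by simpa using P.denom_ne_zero
  rw [div_eq_iff hD', ← num_div_denom P] at hP
  simp only [map_mul, map_pow, algebraMap_C, hP]
  rw [div_pow]
  field_simp

theorem rootMultiplicity_eq_of_div_eq_C_mul_pow {N D : K[X]} (hN : N ≠ 0) (hD : D ≠ 0)
    {t : K} {P : RatFunc K} {h : ℕ} (hNh : N.natDegree < h) (hDh : D.natDegree < h)
    (hP : algebraMap K[X] (RatFunc K) N / algebraMap K[X] (RatFunc K) D = C t * P ^ h)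
    (x : K) : rootMultiplicity x N = rootMultiplicity x D :=
  (rootMultiplicity_modEq_of_mul_pow_eq (mul_denom_pow_eq_of_div_eq hD hP)
      (mul_ne_zero hN (pow_ne_zero _ P.denom_ne_zero)) x).eq_of_lt_of_lt
    ((rootMultiplicity_le_natDegree N x).trans_lt hNh)
    ((rootMultiplicity_le_natDegree D x).trans_lt hDh)

end RatFunc

theorem hth_power_rational_function_forces_diagonal (p : ℕ) [Fact p.Prime]
    (a b c d : ZMod p) (hdet : a * d - b * c ≠ 0) (h : ℕ) (hh : 3 ≤ h)
    (hpow : ∃ (t : ZMod p) (P : RatFunc (ZMod p)),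
      RatFunc.X * (RatFunc.C c * RatFunc.X + RatFunc.C d) /
          (RatFunc.C a * RatFunc.X + RatFunc.C b) = RatFunc.C t * P ^ h) :
    b = 0 ∧ c = 0 := by
  obtain ⟨t, P, hP⟩ := hpow
  set N : (ZMod p)[X] := X * (C c * X + C d)
  set D : (ZMod p)[X] := C a * X + C b
  have hN : N ≠ 0 := mul_ne_zero X_ne_zero <| C_mul_X_add_C_ne_zero <| by
    by_contra! hcd
    simp [hcd.1, hcd.2] at hdet
  have hD : D ≠ 0 := C_mul_X_add_C_ne_zero <| by
    by_contra! hab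
    simp [hab.1, hab.2] at hdet
  have hNh : N.natDegree < h := (natDegree_mul_le.trans (by
    grw [natDegree_X_le, natDegree_linear_le])).trans_lt (by omega)
  have hDh : D.natDegree < h := natDegree_linear_le.trans_lt (by omega)
  have hP' : algebraMap _ (RatFunc (ZMod p)) N / algebraMap _ _ D = RatFunc.C t * P ^ h := by
    simpa [N, D] using hP
  have hroot (x : ZMod p) (hx : N.IsRoot x) : D.IsRoot x := by
    rw [← rootMultiplicity_pos hD,
      ← RatFunc.rootMultiplicity_eq_of_div_eq_C_mul_pow hN hD hNh hDh hP']
    exact (rootMultiplicity_pos hN).2 hx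
  have hb : b = 0 := by simpa [D] using hroot 0 (by simp [N])
  refine ⟨hb, by_contra fun hc => hdet ?_⟩
  have had : a = 0 ∨ d = 0 := by
    simpa [D, hb, hc] using hroot (-d / c) (by simp [N, mul_div_cancel₀ _ hc])
  rcases had with rfl | rfl <;> simp [hb]
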